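/- Let v₀(y) = (3/y²)·e^{y²/4}·(−y + (2+y²)·D₊(y/2)) with D₊ the Dawson integral. Then v₀'(y) = 12·e^{y²/4}·y^{−3}·(y/2 − D₊(y/2)) for all y > 0, and v₀'(y) > 0 for all y > 0. -/

import Mathlib

/-!
The Dawson integral solves `D' = 1 - 2 y D`. Differentiating `v₀` and eliminating `D'` with this
equation, all terms except `12 e^{y²/4} y⁻³ (y/2 - D(y/2))` cancel. Positivity then reduces to
`D(z) < z` for `z > 0`, i.e. `∫₀^z e^{x²} dx < z e^{z²}`, which holds because the integrand is
increasing on `[0, z]`.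
-/

noncomputable def dawson (y : ℝ) : ℝ := Real.exp (-y^2) * ∫ x in (0:ℝ)..y, Real.exp (x^2)

noncomputable def v₀ (y : ℝ) : ℝ :=
  3 / y^2 * Real.exp (y^2/4) * (-y + (2 + y^2) * dawson (y/2))

open Real

lemma continuous_exp_sq : Continuous fun x : ℝ => exp (x^2) := by fun_prop

lemma hasDerivAt_dawson (y : ℝ) : HasDerivAt dawson (1 - 2 * y * dawson y) y := by
  have hint : HasDerivAt (fun t => ∫ x in (0:ℝ)..t, exp (x^2)) (exp (y^2)) y :=
    intervalIntegral.integral_hasDerivAt_right (continuous_exp_sq.intervalIntegrable 0 y)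
      continuous_exp_sq.aestronglyMeasurable.stronglyMeasurableAtFilter
      continuous_exp_sq.continuousAt
  have hgauss : HasDerivAt (fun t => exp (-t^2)) (exp (-y^2) * (-(2 * y))) y := by
    simpa using ((hasDerivAt_pow 2 y).neg).exp
  refine (hgauss.mul hint).congr_deriv ?_
  have hcancel : exp (-y^2) * exp (y^2) = 1 := by rw [← exp_add]; simp
  rw [dawson, hcancel]
  ring

lemma dawson_lt_self {z : ℝ} (hz : 0 < z) : dawson z < z := by
  have hint : ∫ x in (0:ℝ)..z, exp (x^2) < z * exp (z^2) := by
    have := intervalIntegral.integral_lt_integral_of_continuousOn_of_le_of_exists_lt hz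
      continuous_exp_sq.continuousOn (continuousOn_const (c := exp (z^2)))
      (fun x hx => exp_le_exp.2 (by nlinarith [hx.1, hx.2]))
      ⟨0, ⟨le_rfl, hz.le⟩, exp_lt_exp.2 (by nlinarith)⟩
    simpa using this
  calc dawson z < exp (-z^2) * (z * exp (z^2)) := mul_lt_mul_of_pos_left hint (exp_pos _)
    _ = z := by rw [mul_left_comm, ← exp_add]; simp

lemma hasDerivAt_v₀ {y : ℝ} (hy : y ≠ 0) :
    HasDerivAt v₀ (12 * exp (y^2/4) / y^3 * (y/2 - dawson (y/2))) y := by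
  have hprefactor : HasDerivAt (fun t => 3 / t^2) (-6 / y^3) y := by
    refine ((hasDerivAt_const y (3:ℝ)).div (hasDerivAt_pow 2 y)
      (pow_ne_zero 2 hy)).congr_deriv ?_
    field_simp
    ring
  have hgauss : HasDerivAt (fun t => exp (t^2/4)) (exp (y^2/4) * (y/2)) y := by
    refine ((hasDerivAt_pow 2 y).div_const 4).exp.congr_deriv ?_
    ring
  have hdawson : HasDerivAt (fun t => dawson (t/2)) ((1 - 2 * (y/2) * dawson (y/2)) * (1/2)) y :=
    (hasDerivAt_dawson (y/2)).comp (h := fun t => t/2) y ((hasDerivAt_id' y).div_const 2)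
  have hbracket : HasDerivAt (fun t => -t + (2 + t^2) * dawson (t/2))
      (-1 + (2 * y * dawson (y/2) + (2 + y^2) * ((1 - 2 * (y/2) * dawson (y/2)) * (1/2)))) y := by
    refine ((hasDerivAt_id y).neg.add
      (((hasDerivAt_pow 2 y).const_add 2).mul hdawson)).congr_deriv ?_
    simp
  refine ((hprefactor.mul hgauss).mul hbracket).congr_deriv ?_
  simp only [Pi.mul_apply]
  field_simp
  ring

theorem v0_deriv (y : ℝ) (hy : 0 < y) :
    deriv v₀ y = 12 * Real.exp (y^2/4) / y^3 * (y/2 - dawson (y/2)) ∧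
    0 < deriv v₀ y := by
  rw [(hasDerivAt_v₀ hy.ne').deriv]
  refine ⟨rfl, mul_pos (by positivity) ?_⟩
  exact sub_pos.2 (dawson_lt_self (by positivity))
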